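/- In McCarty's realizability model, the Uniformity Principle is realized: for every formula φ(x, y) (x ranging over the universe V, y over ω), there is a partial recursive transformation taking any realizer of ∀x ∃y∈ω φ(x,y) to a realizer of ∃y∈ω ∀x φ(x,y). Concretely, since quantification over V is uniform, if n ⊩ ∀x ∃y∈ω φ(x,y) then from n one can compute a number k and a realizer of ∀x φ(x, k̄), where k̄ is the canonical numeral (von Neumann numeral tree) for k. -/
import Mathlib


/-- Kleene application: evaluate the partial recursive function with code `n` at `m`. -/
def kapp (n m : ℕ) : Part ℕ := (Denumerable.ofNat Nat.Partrec.Code n).eval m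

/-- McCarty's realizability universe: well-founded trees `sup(S)` where `S` is a
set of pairs `(m, v)` with `m ∈ ℕ` and `v` a tree (presented by an indexed family). -/
inductive V : Type 1
  | sup : (I : Type) → (I → ℕ × V) → V

/-- The set of labelled edges into (the root of) a tree. -/
def V.E : V → Set (ℕ × V)
  | V.sup _ t => Set.range t

mutual
  /-- `RMem n x w`: `n ⊩ x ε w`, i.e. there is `(m, v) ∈ E(w)` with `n₀ = m` and
  `n₁ ⊩ x = v`. -/
  inductive RMem : ℕ → V → V → Prop
    | intro (n : ℕ) (x w v : V) (h : (n.unpair.1, v) ∈ w.E)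
        (h2 : REq n.unpair.2 x v) : RMem n x w
  /-- `REq n w w'`: `n ⊩ w = w'`, i.e. for all `(m, v) ∈ E(w)`, `n₀(m)` is defined and
  `n₀(m) ⊩ v ε w'`, and for all `(m', v') ∈ E(w')`, `n₁(m')` is defined and
  `n₁(m') ⊩ v' ε w`. -/
  inductive REq : ℕ → V → V → Prop
    | intro (n : ℕ) (w w' : V)
        (d1 : ∀ m v, (m, v) ∈ w.E → (kapp n.unpair.1 m).Dom)
        (h1 : ∀ m v (h : (m, v) ∈ w.E),
          RMem ((kapp n.unpair.1 m).get (d1 m v h)) v w')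
        (d2 : ∀ m' v', (m', v') ∈ w'.E → (kapp n.unpair.2 m').Dom)
        (h2 : ∀ m' v' (h : (m', v') ∈ w'.E),
          RMem ((kapp n.unpair.2 m').get (d2 m' v' h)) v' w) :
        REq n w w'
end

/-- Kleene realizability of an implication between two abstractly realized statements:
`n ⊩ φ → ψ` iff for every `m ⊩ φ`, `n(m)` is defined and `n(m) ⊩ ψ`. -/
def RImp (P Q : ℕ → Prop) (n : ℕ) : Prop :=
  ∀ m, P m → ∃ k, k ∈ kapp n m ∧ Q k

/-- The canonical (von Neumann) numeral tree `k̄`: its edges are `(j, j̄)` for `j < k`. -/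
def numeral : ℕ → V
  | k => V.sup {j : ℕ // j < k} (fun j => (j.val, numeral j.val))
decreasing_by exact j.2

/-- The canonical tree `ω̄` for the set of natural numbers: its edges are `(k, k̄)`. -/
def omegaV : V := V.sup ℕ (fun k => (k, numeral k))

lemma V.ind {P : V → Prop}
    (h : ∀ (I : Type) (t : I → ℕ × V), (∀ i, P (t i).2) → P (V.sup I t)) :
    ∀ w, P w :=
  fun w => V.rec (motive_1 := P) (motive_2 := fun p => P p.2)
    (fun I t ih => h I t ih) (fun _ _ hp => hp) w

lemma kapp_encode (cf : Nat.Partrec.Code) (m : ℕ) :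
    kapp (Encodable.encode cf) m = cf.eval m := by
  simp [kapp, Denumerable.ofNat_encode]

/-- There is a reflexivity realizer. -/
lemma exists_refl_realizer : ∃ e : ℕ,
    (∀ m, kapp e.unpair.1 m = Part.some (Nat.pair m e)) ∧
    (∀ m, kapp e.unpair.2 m = Part.some (Nat.pair m e)) := by
  have hp : Primrec₂ (fun (cf : Nat.Partrec.Code) (m : ℕ) =>
      Nat.pair m (Nat.pair (Encodable.encode cf) (Encodable.encode cf))) :=
    Primrec₂.natPair.comp Primrec.snd
      (Primrec₂.natPair.comp (Primrec.encode.comp Primrec.fst)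
        (Primrec.encode.comp Primrec.fst))
  have hf : Partrec₂ (fun (cf : Nat.Partrec.Code) (m : ℕ) =>
      (Part.some (Nat.pair m (Nat.pair (Encodable.encode cf) (Encodable.encode cf))) : Part ℕ)) :=
    Computable₂.partrec₂ hp.to_comp
  obtain ⟨cf, hcf⟩ := Nat.Partrec.Code.fixed_point₂ hf
  refine ⟨Nat.pair (Encodable.encode cf) (Encodable.encode cf), ?_, ?_⟩ <;>
    intro m <;> simp [Nat.unpair_pair, kapp_encode, hcf]

lemma REq_refl (e : ℕ)
    (h1 : ∀ m, kapp e.unpair.1 m = Part.some (Nat.pair m e))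
    (h2 : ∀ m, kapp e.unpair.2 m = Part.some (Nat.pair m e)) :
    ∀ w, REq e w w := by
  refine V.ind (fun I t ih => ?_)
  have key : ∀ (a : ℕ) (ha : ∀ m, kapp a m = Part.some (Nat.pair m e))
      (m : ℕ) (v : V) (hv : (m, v) ∈ (V.sup I t).E) (d : (kapp a m).Dom),
      RMem ((kapp a m).get d) v (V.sup I t) := by
    intro a ha m v hv d
    obtain ⟨i, hi⟩ := hv
    have hget : (kapp a m).get d = Nat.pair m e := by simp [ha]
    refine RMem.intro _ v (V.sup I t) v ?_ ?_
    · rw [hget, Nat.unpair_pair]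
      exact ⟨i, hi⟩
    · rw [hget, Nat.unpair_pair]
      rw [show v = (t i).2 by rw [hi]]
      exact ih i
  exact REq.intro e _ _
    (fun m v hv => by rw [h1]; trivial)
    (fun m v hv => key _ h1 m v hv _)
    (fun m v hv => by rw [h2]; trivial)
    (fun m v hv => key _ h2 m v hv _)
/-- The Uniformity Principle is realized in McCarty's model: for any (realizability
interpretation of a) formula `φ(x, y)` that respects realized equality in its numeric
argument by a fixed code `c`, there is a partial recursive transformation `u` taking
any realizer `n` of `∀x ∃y∈ω φ(x,y)` (uniform `∀`, with bounded `∃y∈ω` interpreted as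
`∃y (y ε ω̄ ∧ φ)`) to a realizer of `∃y∈ω ∀x φ(x,y)`; the witness is a canonical
numeral `k̄` whose index `k` is computed from `n`. -/
theorem uniformity_realized (Rφ : ℕ → V → V → Prop) (c : ℕ)
    (hc : ∀ (y y' x : V) (n m : ℕ), REq n y y' → Rφ m x y →
      ∃ k, k ∈ kapp c (Nat.pair n m) ∧ Rφ k x y') :
    ∃ u : ℕ, ∀ n : ℕ,
      (∀ x : V, ∃ y : V, RMem n.unpair.1 y omegaV ∧ Rφ n.unpair.2 x y) →
      ∃ r, r ∈ kapp u n ∧ ∃ k : ℕ,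
        RMem r.unpair.1 (numeral k) omegaV ∧ ∀ x : V, Rφ r.unpair.2 x (numeral k) := by
  classical
  obtain ⟨e, he1, he2⟩ := exists_refl_realizer
  set c₀ : Nat.Partrec.Code := Denumerable.ofNat Nat.Partrec.Code c with hc₀
  -- the partial recursive transformation
  set g : ℕ →. ℕ := fun n =>
    (c₀.eval (Nat.pair n.unpair.1.unpair.2 n.unpair.2)).map
      (fun k' => Nat.pair (Nat.pair n.unpair.1.unpair.1 e) k') with hg_def
  have h0 : Partrec c₀.eval := Partrec.nat_iff.2 (Nat.Partrec.Code.exists_code.2 ⟨c₀, rfl⟩)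
  have harg : Computable (fun n : ℕ => Nat.pair n.unpair.1.unpair.2 n.unpair.2) :=
    (Primrec₂.natPair.comp
      ((Primrec.snd.comp Primrec.unpair).comp (Primrec.fst.comp Primrec.unpair))
      (Primrec.snd.comp Primrec.unpair)).to_comp
  have hmap : Computable₂ (fun (n k' : ℕ) => Nat.pair (Nat.pair n.unpair.1.unpair.1 e) k') :=
    Primrec₂.to_comp (Primrec₂.natPair.comp
      (Primrec₂.natPair.comp
        ((Primrec.fst.comp Primrec.unpair).comp
          ((Primrec.fst.comp Primrec.unpair).comp Primrec.fst))
        (Primrec.const e))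
      Primrec.snd)
  have hg : Partrec g := (h0.comp harg).map hmap
  obtain ⟨cg, hcg⟩ := Nat.Partrec.Code.exists_code.1 (Partrec.nat_iff.1 hg)
  refine ⟨Encodable.encode cg, fun n H => ?_⟩
  set k := n.unpair.1.unpair.1 with hk
  -- from any x, a realizer of φ(x, k̄) in kapp c (pair n₁₂ n₂)
  have helper : ∀ x : V, ∃ k', k' ∈ kapp c (Nat.pair n.unpair.1.unpair.2 n.unpair.2) ∧
      Rφ k' x (numeral k) := by
    intro x
    obtain ⟨y, hm, hφ⟩ := H x
    obtain ⟨_, _, _, v, hv, heq⟩ := hm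
    obtain ⟨j, hj⟩ := hv
    obtain ⟨hj1, hj2⟩ := Prod.mk.injEq .. ▸ hj
    have hv' : v = numeral k := by rw [← hj2, hj1]
    exact hc y (numeral k) x n.unpair.1.unpair.2 n.unpair.2 (hv' ▸ heq) hφ
  obtain ⟨k', hk', -⟩ := helper (numeral 0)
  refine ⟨Nat.pair (Nat.pair k e) k', ?_, k, ?_, ?_⟩
  · have : kapp (Encodable.encode cg) n = g n := by rw [kapp_encode, hcg]
    rw [this, hg_def]
    exact Part.mem_map _ hk'
  · rw [Nat.unpair_pair]
    refine RMem.intro (Nat.pair k e) (numeral k) omegaV (numeral k) ?_ ?_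
    · rw [Nat.unpair_pair]
      exact ⟨k, rfl⟩
    · rw [Nat.unpair_pair]
      exact REq_refl e he1 he2 (numeral k)
  · intro x
    obtain ⟨k'', hk'', hφ''⟩ := helper x
    rw [Nat.unpair_pair]
    rwa [Part.mem_unique hk'' hk'] at hφ''
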